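/- arXiv:1308.2493 — 2 statements merged into one kernel-verified Lean document; each statement's English description precedes it below -/
import Mathlib

section
/- (Corollary to Lemma 1) For every a, b ∈ {1,2,3} with a ≠ b and every positive integer k, the case gate that applies σ_a^{1/k} when the control is 0 and (σ_a^{1/k})† when the control is 1 factors as: E₀₀ ⊗ σ_a^{1/k} + E₁₁ ⊗ (σ_a^{1/k})† = C₁(σ_b) · ((Z^{1/k})† ⊗ σ_a^{1/k}) · C₁(σ_b). -/
open Matrix Complex
open scoped Kronecker

noncomputable section

/-- The Pauli matrices σ₁ = X, σ₂ = Y, σ₃ = Z. -/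
def σ : ℕ → Matrix (Fin 2) (Fin 2) ℂ
  | 1 => !![0, 1; 1, 0]
  | 2 => !![0, -Complex.I; Complex.I, 0]
  | 3 => !![1, 0; 0, -1]
  | _ => 1

/-- Rotation by angle θ around axis a: R_a(θ) = cos(θ/2)·1 − i·sin(θ/2)·σ_a. -/
def R (a : ℕ) (θ : ℝ) : Matrix (Fin 2) (Fin 2) ℂ :=
  (Real.cos (θ / 2) : ℂ) • (1 : Matrix (Fin 2) (Fin 2) ℂ)
    - (Complex.I * (Real.sin (θ / 2) : ℂ)) • σ a

/-- The k-th Pauli root σ_a^{1/k} = e^{iπ/(2k)}·R_a(π/k). -/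
def pauliRoot (a k : ℕ) : Matrix (Fin 2) (Fin 2) ℂ :=
  Complex.exp (Complex.I * (Real.pi : ℂ) / (2 * (k : ℂ))) • R a (Real.pi / (k : ℝ))

def E00 : Matrix (Fin 2) (Fin 2) ℂ := !![1, 0; 0, 0]
def E11 : Matrix (Fin 2) (Fin 2) ℂ := !![0, 0; 0, 1]

/-- Controlled gate, control on the first qubit. -/
def C₁ (U : Matrix (Fin 2) (Fin 2) ℂ) : Matrix (Fin 2 × Fin 2) (Fin 2 × Fin 2) ℂ :=
  E00 ⊗ₖ (1 : Matrix (Fin 2) (Fin 2) ℂ) + E11 ⊗ₖ U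

/-- Controlled gate, control on the second qubit. -/
def C₂ (U : Matrix (Fin 2) (Fin 2) ℂ) : Matrix (Fin 2 × Fin 2) (Fin 2 × Fin 2) ℂ :=
  (1 : Matrix (Fin 2) (Fin 2) ℂ) ⊗ₖ E00 + U ⊗ₖ E11

lemma hE0000 : E00 * E00 = E00 := by
  ext i j; fin_cases i <;> fin_cases j <;> simp [E00, Matrix.mul_apply, Fin.sum_univ_succ]
lemma hE0011 : E00 * E11 = 0 := by
  ext i j; fin_cases i <;> fin_cases j <;> simp [E00, E11, Matrix.mul_apply, Fin.sum_univ_succ]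
lemma hE1100 : E11 * E00 = 0 := by
  ext i j; fin_cases i <;> fin_cases j <;> simp [E00, E11, Matrix.mul_apply, Fin.sum_univ_succ]
lemma hE1111 : E11 * E11 = E11 := by
  ext i j; fin_cases i <;> fin_cases j <;> simp [E11, Matrix.mul_apply, Fin.sum_univ_succ]

lemma sigma_herm : ∀ a ∈ ({1,2,3} : Set ℕ), (σ a)ᴴ = σ a := by
  intro a ha
  simp only [Set.mem_insert_iff, Set.mem_singleton_iff] at ha
  rcases ha with rfl | rfl | rfl <;>
    · ext i j; fin_cases i <;> fin_cases j <;> simp [σ, Matrix.conjTranspose_apply]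

lemma sigma_invol : ∀ b ∈ ({1,2,3} : Set ℕ), σ b * σ b = 1 := by
  intro b hb
  simp only [Set.mem_insert_iff, Set.mem_singleton_iff] at hb
  rcases hb with rfl | rfl | rfl <;>
    · ext i j
      fin_cases i <;> fin_cases j <;>
        simp [σ, Matrix.mul_apply, Matrix.one_apply, Fin.sum_univ_succ]

lemma sigma_flip : ∀ a ∈ ({1,2,3} : Set ℕ), ∀ b ∈ ({1,2,3} : Set ℕ), a ≠ b →
    σ b * σ a * σ b = -σ a := by
  intro a ha b hb hab
  simp only [Set.mem_insert_iff, Set.mem_singleton_iff] at ha hb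
  rcases ha with rfl | rfl | rfl <;> rcases hb with rfl | rfl | rfl <;>
    first
    | exact absurd rfl hab
    | · ext i j
        fin_cases i <;> fin_cases j <;>
          simp [σ, Matrix.mul_apply, Fin.sum_univ_succ]

/-- Corollary to Lemma 1: the case gate applying σ_a^{1/k} on control 0 and
(σ_a^{1/k})† on control 1 factors as C₁(σ_b)·((Z^{1/k})† ⊗ σ_a^{1/k})·C₁(σ_b). -/
theorem case_circuit' :
    ∀ a ∈ ({1, 2, 3} : Set ℕ), ∀ b ∈ ({1, 2, 3} : Set ℕ), a ≠ b → ∀ k : ℕ, 0 < k →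
      E00 ⊗ₖ pauliRoot a k + E11 ⊗ₖ (pauliRoot a k)ᴴ
        = C₁ (σ b) * ((pauliRoot 3 k)ᴴ ⊗ₖ pauliRoot a k) * C₁ (σ b) := by
  intro a ha b hb hab k hk
  set e : ℂ := Complex.exp (Complex.I * (Real.pi : ℂ) / (2 * (k : ℂ))) with he_def
  set c : ℂ := (↑(Real.cos (Real.pi / (k:ℝ) / 2)) : ℂ) with hc_def
  set s : ℂ := (↑(Real.sin (Real.pi / (k:ℝ) / 2)) : ℂ) with hs_def
  have he0 : e ≠ 0 := Complex.exp_ne_zero _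
  have hxu : e = c + s * Complex.I := by
    rw [he_def, hc_def, hs_def, Complex.ofReal_cos, Complex.ofReal_sin, ← Complex.exp_mul_I]
    congr 1
    push_cast
    ring
  have hconj : (starRingEnd ℂ) e = e⁻¹ := by
    rw [he_def, ← Complex.exp_conj, ← Complex.exp_neg]
    congr 1
    simp [map_div₀, Complex.conj_I, map_ofNat]
    ring
  have hinv : e⁻¹ = c - s * Complex.I := by
    rw [← hconj, hxu]
    simp only [map_add, _root_.map_mul, hc_def, hs_def, Complex.conj_ofReal, Complex.conj_I]
    ring
  set q : ℂ := e⁻¹ * e⁻¹ with hq_def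
  -- Hermitian conjugate of the Pauli root
  have hPH : (pauliRoot a k)ᴴ = e⁻¹ • (c • (1 : Matrix (Fin 2) (Fin 2) ℂ) + (Complex.I * s) • σ a) := by
    unfold pauliRoot R
    rw [Matrix.conjTranspose_smul, ← he_def, Complex.star_def, hconj, Matrix.conjTranspose_sub,
      Matrix.conjTranspose_smul, Matrix.conjTranspose_smul, Matrix.conjTranspose_one,
      sigma_herm a ha]
    simp only [Complex.star_def, _root_.map_mul, Complex.conj_ofReal, Complex.conj_I]
    simp only [← hc_def, ← hs_def]
    module
  -- conjugation by σ_b flips the sign of σ_a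
  have hSPS : σ b * pauliRoot a k * σ b
      = e • (c • (1 : Matrix (Fin 2) (Fin 2) ℂ) + (Complex.I * s) • σ a) := by
    unfold pauliRoot R
    rw [← he_def]
    simp only [← hc_def, ← hs_def]
    rw [Matrix.mul_smul, Matrix.smul_mul]
    congr 1
    rw [Matrix.mul_sub, Matrix.sub_mul]
    rw [mul_smul_comm, smul_mul_assoc, mul_smul_comm, smul_mul_assoc, Matrix.mul_one]
    rw [sigma_invol b hb, sigma_flip a ha b hb hab]
    rw [smul_neg, sub_neg_eq_add]
  -- the key scalar identity q·e = e⁻¹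
  have hqe : q * e = e⁻¹ := by
    rw [hq_def]; field_simp
  have hkey : q • (σ b * pauliRoot a k * σ b) = (pauliRoot a k)ᴴ := by
    rw [hSPS, hPH, smul_smul, hqe]
  -- (Z^{1/k})† = E00 + q • E11
  have h3 : pauliRoot 3 k = !![e * (c - s * Complex.I), 0; 0, e * (c + s * Complex.I)] := by
    unfold pauliRoot R
    rw [← he_def]
    simp only [← hc_def, ← hs_def]
    ext i j
    fin_cases i <;> fin_cases j <;>
      simp [σ, Matrix.one_apply] <;> exact Or.inl (by ring)
  have hq00 : e * (c - s * Complex.I) = 1 := by rw [← hinv, mul_inv_cancel₀ he0]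
  have hq11 : (starRingEnd ℂ) (e * (c + s * Complex.I)) = q := by
    rw [← hxu, _root_.map_mul, hconj, hq_def]
  have hQ : (pauliRoot 3 k)ᴴ = E00 + q • E11 := by
    rw [h3]
    ext i j
    fin_cases i <;> fin_cases j
    · simp [E00, E11, Matrix.conjTranspose_apply, hq00]
    · simp [E00, E11, Matrix.conjTranspose_apply]
    · simp [E00, E11, Matrix.conjTranspose_apply]
    · simp [E00, E11, Matrix.conjTranspose_apply, Complex.star_def]
      rw [hconj]
      simp only [hc_def, hs_def, Complex.conj_ofReal]
      rw [← hc_def, ← hs_def, hq_def, hinv]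
      ring
  -- assemble
  rw [hQ]
  simp only [C₁, Matrix.add_kronecker, Matrix.smul_kronecker, Matrix.add_mul, Matrix.mul_add,
    smul_mul_assoc, mul_smul_comm, ← Matrix.mul_kronecker_mul, hE0000, hE0011, hE1100, hE1111,
    Matrix.zero_kronecker, Matrix.one_mul, Matrix.mul_one, Matrix.zero_mul, Matrix.mul_zero,
    smul_zero, add_zero, zero_add]
  rw [← hkey, Matrix.kronecker_smul]
end
end

section
/- (Theorem removing a control line) For every a, b ∈ {1,2,3} with a ≠ b and every positive integer k, the controlled k-th Pauli root decomposes using 2k-th roots as: C₁(σ_a^{1/k}) = C₁(σ_b) · (Z^{1/(2k)} ⊗ (σ_a^{1/(2k)})†) · C₁(σ_b) · (1 ⊗ σ_a^{1/(2k)}). -/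
open Matrix Complex
open scoped Kronecker

noncomputable section

/-- auxiliary rotation form -/
def ρ (T : Matrix (Fin 2) (Fin 2) ℂ) (x : ℝ) : Matrix (Fin 2) (Fin 2) ℂ :=
  Complex.exp ((x : ℂ) * Complex.I) •
    ((Real.cos x : ℂ) • (1 : Matrix (Fin 2) (Fin 2) ℂ)
      - (Complex.I * (Real.sin x : ℂ)) • T)

lemma blockMul (M N M' N' : Matrix (Fin 2) (Fin 2) ℂ) :
    (E00 ⊗ₖ M + E11 ⊗ₖ N) * (E00 ⊗ₖ M' + E11 ⊗ₖ N')
      = E00 ⊗ₖ (M * M') + E11 ⊗ₖ (N * N') := by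
  have h1 : E00 * E00 = E00 := by ext i j; fin_cases i <;> fin_cases j <;> simp [E00, Matrix.mul_apply, Fin.sum_univ_succ]
  have h2 : E00 * E11 = 0 := by ext i j; fin_cases i <;> fin_cases j <;> simp [E00, E11, Matrix.mul_apply, Fin.sum_univ_succ]
  have h3 : E11 * E00 = 0 := by ext i j; fin_cases i <;> fin_cases j <;> simp [E00, E11, Matrix.mul_apply, Fin.sum_univ_succ]
  have h4 : E11 * E11 = E11 := by ext i j; fin_cases i <;> fin_cases j <;> simp [E11, Matrix.mul_apply, Fin.sum_univ_succ]
  simp [add_mul, mul_add, ← Matrix.mul_kronecker_mul, h1, h2, h3, h4]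

lemma one_eq : (1 : Matrix (Fin 2) (Fin 2) ℂ) = E00 + E11 := by
  ext i j; fin_cases i <;> fin_cases j <;> simp [E00, E11, Matrix.one_apply]

lemma rho_conjT (T : Matrix (Fin 2) (Fin 2) ℂ) (hT : Tᴴ = T) (x : ℝ) :
    (ρ T x)ᴴ = Complex.exp (-((x : ℂ) * Complex.I)) •
      ((Real.cos x : ℂ) • (1 : Matrix (Fin 2) (Fin 2) ℂ)
        + (Complex.I * (Real.sin x : ℂ)) • T) := by
  unfold ρ
  rw [Matrix.conjTranspose_smul, Matrix.conjTranspose_sub, Matrix.conjTranspose_smul,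
    Matrix.conjTranspose_smul, Matrix.conjTranspose_one, hT]
  simp only [Complex.star_def, _root_.map_mul, Complex.conj_ofReal, Complex.conj_I,
    ← Complex.exp_conj]
  rw [show (x:ℂ) * -I = -((x:ℂ)*I) by ring, show (-I * (Real.sin x:ℂ)) = -(I * (Real.sin x:ℂ)) by ring, neg_smul, sub_neg_eq_add]

lemma L1 (T : Matrix (Fin 2) (Fin 2) ℂ) (hT : Tᴴ = T) (hTT : T * T = 1) (x : ℝ) :
    (ρ T x)ᴴ * ρ T x = 1 := by
  rw [rho_conjT T hT]
  unfold ρ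
  have hexp : Complex.exp (-((x : ℂ) * Complex.I)) * Complex.exp ((x : ℂ) * Complex.I) = 1 := by
    rw [← Complex.exp_add]; ring_nf; exact Complex.exp_zero
  rw [Matrix.smul_mul, Matrix.mul_smul, smul_smul, hexp, one_smul]
  simp only [add_mul, sub_mul, mul_add, mul_sub, Matrix.smul_mul, Matrix.mul_smul,
    Matrix.mul_one, Matrix.one_mul, smul_smul, hTT]
  match_scalars
  · linear_combination Complex.cos_sq_add_sin_sq (x:ℂ) - (Complex.sin (x:ℂ))^2 * Complex.I_sq
  · ring

lemma L2 (S T : Matrix (Fin 2) (Fin 2) ℂ) (hS : S * S = 1) (hT : Tᴴ = T)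
    (hTT : T * T = 1) (hanti : S * T * S = -T) (x : ℝ) :
    S * (Complex.exp (2 * (x : ℂ) * Complex.I) • (ρ T x)ᴴ) * S * ρ T x = ρ T (2 * x) := by
  rw [rho_conjT T hT, smul_smul]
  have h1 : Complex.exp (2 * (x:ℂ) * Complex.I) * Complex.exp (-((x:ℂ) * Complex.I))
      = Complex.exp ((x:ℂ) * Complex.I) := by
    rw [← Complex.exp_add]; congr 1; ring
  rw [h1]
  unfold ρ
  simp only [Matrix.mul_smul, Matrix.smul_mul, smul_smul, ← Complex.exp_add]
  simp only [mul_add, add_mul, mul_sub, sub_mul, Matrix.smul_mul, Matrix.mul_smul,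
    Matrix.mul_one, Matrix.one_mul, smul_smul, hS, hanti, hTT, neg_mul, mul_neg,
    smul_neg, neg_smul]
  have hE : Complex.exp ((x:ℂ)*Complex.I + (x:ℂ)*Complex.I) = Complex.exp (2*(x:ℂ)*Complex.I) := by
    congr 1; ring
  match_scalars
  · rw [hE, Complex.cos_two_mul]
    linear_combination Complex.exp (2*(x:ℂ)*Complex.I) * Complex.sin (x:ℂ)^2 * Complex.I_sq
      - Complex.exp (2*(x:ℂ)*Complex.I) * Complex.cos_sq_add_sin_sq (x:ℂ)
  · rw [hE, Complex.sin_two_mul]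
    ring

lemma rho_sigma3 (x : ℝ) :
    ρ (σ 3) x = E00 + Complex.exp (2 * (x:ℂ) * Complex.I) • E11 := by
  have h00 : Complex.exp ((x:ℂ) * Complex.I)
      * (Complex.cos (x:ℂ) - Complex.I * Complex.sin (x:ℂ)) = 1 := by
    rw [show Complex.cos ↑x - Complex.I * Complex.sin ↑x = Complex.exp (-(x:ℂ) * Complex.I) by
        rw [Complex.exp_mul_I, Complex.cos_neg, Complex.sin_neg]; ring,
      ← Complex.exp_add, show (x:ℂ) * Complex.I + -(x:ℂ) * Complex.I = 0 by ring,
      Complex.exp_zero]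
  have h11 : Complex.exp ((x:ℂ) * Complex.I)
      * (Complex.cos (x:ℂ) + Complex.I * Complex.sin (x:ℂ))
      = Complex.exp (2 * (x:ℂ) * Complex.I) := by
    rw [show Complex.cos ↑x + Complex.I * Complex.sin ↑x = Complex.exp ((x:ℂ) * Complex.I) by
        rw [Complex.exp_mul_I]; ring,
      ← Complex.exp_add]
    congr 1; ring
  ext i j
  fin_cases i <;> fin_cases j <;>
    simp [ρ, σ, E00, E11, Matrix.one_apply] <;>
    [linear_combination h00; linear_combination h11]

/-- Removing a control line: C₁(σ_a^{1/k}) decomposes using 2k-th roots as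
C₁(σ_b)·(Z^{1/(2k)} ⊗ (σ_a^{1/(2k)})†)·C₁(σ_b)·(1 ⊗ σ_a^{1/(2k)}). -/
theorem remove_one_line :
    ∀ a ∈ ({1, 2, 3} : Set ℕ), ∀ b ∈ ({1, 2, 3} : Set ℕ), a ≠ b → ∀ k : ℕ, 0 < k →
      C₁ (pauliRoot a k)
        = C₁ (σ b) * (pauliRoot 3 (2 * k) ⊗ₖ (pauliRoot a (2 * k))ᴴ) * C₁ (σ b)
            * ((1 : Matrix (Fin 2) (Fin 2) ℂ) ⊗ₖ pauliRoot a (2 * k)) := by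
  intro a ha b hb hab k hk
  simp only [Set.mem_insert_iff, Set.mem_singleton_iff] at ha hb
  have hT : (σ a)ᴴ = σ a := by
    rcases ha with rfl | rfl | rfl <;>
      (ext i j; fin_cases i <;> fin_cases j <;> simp [σ, Matrix.conjTranspose_apply])
  have hTT : σ a * σ a = 1 := by
    rcases ha with rfl | rfl | rfl <;>
      (ext i j; fin_cases i <;> fin_cases j <;>
        simp [σ, Matrix.mul_apply, Fin.sum_univ_succ, Matrix.one_apply])
  have hS : σ b * σ b = 1 := by
    rcases hb with rfl | rfl | rfl <;>
      (ext i j; fin_cases i <;> fin_cases j <;>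
        simp [σ, Matrix.mul_apply, Fin.sum_univ_succ, Matrix.one_apply])
  have hanti : σ b * σ a * σ b = -σ a := by
    rcases ha with rfl | rfl | rfl <;> rcases hb with rfl | rfl | rfl <;>
      first
        | exact absurd rfl hab
        | (ext i j; fin_cases i <;> fin_cases j <;>
            simp [σ, Matrix.mul_apply, Fin.sum_univ_succ])
  have hk0 : (k : ℝ) ≠ 0 := Nat.cast_ne_zero.mpr hk.ne'
  have hk0' : (k : ℂ) ≠ 0 := Nat.cast_ne_zero.mpr hk.ne'
  set x : ℝ := Real.pi / (4 * k) with hx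
  have hA : ∀ c, pauliRoot c (2 * k) = ρ (σ c) x := by
    intro c
    have h1 : Real.pi / ((2 * k : ℕ) : ℝ) / 2 = x := by
      rw [hx]; push_cast; ring
    have h2 : Complex.I * (Real.pi : ℂ) / (2 * ((2 * k : ℕ) : ℂ)) = (x : ℂ) * Complex.I := by
      rw [hx]; push_cast; ring
    unfold pauliRoot R ρ
    rw [h1, h2]
  have hPk : pauliRoot a k = ρ (σ a) (2 * x) := by
    have h3 : Real.pi / (k : ℝ) / 2 = 2 * x := by
      rw [hx]; push_cast; ring
    have h4 : Complex.I * (Real.pi : ℂ) / (2 * (k : ℂ)) = ((2 * x : ℝ) : ℂ) * Complex.I := by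
      rw [hx]; push_cast; ring
    unfold pauliRoot R ρ
    rw [h3, h4]
  rw [hA, hA, hPk, rho_sigma3]
  have expand1 : (E00 + Complex.exp (2 * (x:ℂ) * Complex.I) • E11) ⊗ₖ (ρ (σ a) x)ᴴ
      = E00 ⊗ₖ (ρ (σ a) x)ᴴ
        + E11 ⊗ₖ (Complex.exp (2 * (x:ℂ) * Complex.I) • (ρ (σ a) x)ᴴ) := by
    rw [Matrix.add_kronecker, Matrix.smul_kronecker, Matrix.kronecker_smul]
  have expand2 : (1 : Matrix (Fin 2) (Fin 2) ℂ) ⊗ₖ ρ (σ a) x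
      = E00 ⊗ₖ ρ (σ a) x + E11 ⊗ₖ ρ (σ a) x := by
    rw [one_eq, Matrix.add_kronecker]
  unfold C₁
  rw [expand1, expand2, blockMul, blockMul, blockMul]
  congr 1
  · simp only [Matrix.one_mul, Matrix.mul_one, L1 _ hT hTT]
  · rw [L2 _ _ hS hT hTT hanti]
end
end
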